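/- arXiv:1802.08880 — 2 statements merged into one kernel-verified Lean document; each statement's English description precedes it below -/
import Mathlib

section
/- Let f : ℝ^d → ℝ be differentiable with L-Lipschitz gradient, h : ℝ^d → ℝ convex, η > 0, and Ψ = f + h. Fix x, g ∈ ℝ^d and let y = prox_{ηh}(x - ηg). Then for every z ∈ ℝ^d: Ψ(y) ≤ Ψ(z) + ⟨y - z, ∇f(x) - g⟩ + (L/2 - 1/(2η))‖y - x‖² + (L/2 + 1/(2η))‖z - x‖² - 1/(2η)‖y - z‖². -/
open scoped RealInnerProductSpace
set_option maxHeartbeats 1000000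

section aux

variable {E : Type*} [NormedAddCommGroup E] [InnerProductSpace ℝ E] [CompleteSpace E]

lemma combo_norm_sq (p q : E) (t : ℝ) :
    ‖(1 - t) • p + t • q‖ ^ 2
      = (1 - t) * ‖p‖ ^ 2 + t * ‖q‖ ^ 2 - t * (1 - t) * ‖p - q‖ ^ 2 := by
  rw [← real_inner_self_eq_norm_sq, ← real_inner_self_eq_norm_sq,
    ← real_inner_self_eq_norm_sq, ← real_inner_self_eq_norm_sq]
  simp only [inner_add_left, inner_add_right, inner_sub_left, inner_sub_right,
    inner_smul_left, inner_smul_right, RCLike.conj_to_real]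
  rw [real_inner_comm q p]
  ring

lemma descent_lemma (f : E → ℝ) (f' : E → E)
    (hf : ∀ x, HasGradientAt f (f' x) x) (L : ℝ)
    (hLip : ∀ a b, ‖f' a - f' b‖ ≤ L * ‖a - b‖) (a b : E) :
    |f b - f a - ⟪f' a, b - a⟫| ≤ L / 2 * ‖b - a‖ ^ 2 := by
  set v := b - a with hv
  set φ : ℝ → ℝ := fun t => f (a + t • v) - t * ⟪f' a, v⟫ - f a with hφ
  have hd : ∀ t : ℝ, HasDerivAt φ (⟪f' (a + t • v) - f' a, v⟫) t := by
    intro t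
    have hline : HasDerivAt (fun t : ℝ => a + t • v) v t := by
      simpa using ((hasDerivAt_id t).smul_const v).const_add a
    have h1 : HasDerivAt (fun t : ℝ => f (a + t • v)) ⟪f' (a + t • v), v⟫ t := by
      have := ((hf (a + t • v)).hasFDerivAt).comp_hasDerivAt t hline
      simpa [InnerProductSpace.toDual_apply_apply, Function.comp_def] using this
    have h2 : HasDerivAt (fun t : ℝ => t * ⟪f' a, v⟫) ⟪f' a, v⟫ t := by
      simpa using (hasDerivAt_id t).mul_const (⟪f' a, v⟫)
    have := (h1.sub h2).sub_const (f a)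
    simpa [inner_sub_left, hφ] using this
  set B : ℝ → ℝ := fun t => L / 2 * ‖v‖ ^ 2 * t ^ 2 with hB
  have hB' : ∀ t : ℝ, HasDerivAt B (L * ‖v‖ ^ 2 * t) t := by
    intro t
    have := (hasDerivAt_pow 2 t).const_mul (L / 2 * ‖v‖ ^ 2)
    exact this.congr_deriv (by norm_num; ring)
  have key : ∀ u ∈ Set.Icc (0:ℝ) 1, ‖φ u‖ ≤ B u := by
    apply image_norm_le_of_norm_deriv_right_le_deriv_boundary
      (f := φ) (f' := fun t => ⟪f' (a + t • v) - f' a, v⟫)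
      (fun t _ => (hd t).continuousAt.continuousWithinAt)
      (fun t _ => (hd t).hasDerivWithinAt)
      (by simp [hφ, hB]) hB'
    intro t ht
    have h1 : ‖(⟪f' (a + t • v) - f' a, v⟫ : ℝ)‖ ≤ ‖f' (a + t • v) - f' a‖ * ‖v‖ :=
      norm_inner_le_norm _ _
    have h2 : ‖f' (a + t • v) - f' a‖ ≤ L * ‖t • v‖ := by
      simpa using hLip (a + t • v) a
    have h3 : ‖t • v‖ = t * ‖v‖ := by
      rw [norm_smul, Real.norm_eq_abs, abs_of_nonneg ht.1]
    calc ‖(⟪f' (a + t • v) - f' a, v⟫ : ℝ)‖ ≤ ‖f' (a + t • v) - f' a‖ * ‖v‖ := h1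
      _ ≤ L * ‖t • v‖ * ‖v‖ := by
          apply mul_le_mul_of_nonneg_right h2 (norm_nonneg _)
      _ = L * ‖v‖ ^ 2 * t := by rw [h3]; ring
  have h1 := key 1 (by norm_num)
  simp only [hφ, hB, one_smul, Real.norm_eq_abs, one_pow, mul_one, one_mul] at h1
  have hab : a + v = b := by rw [hv]; abel
  rw [hab] at h1
  have heq : f b - f a - ⟪f' a, v⟫ = f b - ⟪f' a, v⟫ - f a := by ring
  rw [heq]
  exact h1

end aux

theorem stmt4 (d : ℕ) (f h : EuclideanSpace ℝ (Fin d) → ℝ)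
    (f' : EuclideanSpace ℝ (Fin d) → EuclideanSpace ℝ (Fin d))
    (hf : ∀ x, HasGradientAt f (f' x) x) (L : ℝ) (hL : 0 < L)
    (hLip : ∀ a b, ‖f' a - f' b‖ ≤ L * ‖a - b‖)
    (hconv : ConvexOn ℝ Set.univ h) (η : ℝ) (hη : 0 < η)
    (x g y : EuclideanSpace ℝ (Fin d))
    (hy : ∀ w, h y + (1 / (2 * η)) * ‖y - (x - η • g)‖ ^ 2 ≤
      h w + (1 / (2 * η)) * ‖w - (x - η • g)‖ ^ 2) :
    ∀ z, f y + h y ≤ (f z + h z) + ⟪y - z, f' x - g⟫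
      + (L / 2 - 1 / (2 * η)) * ‖y - x‖ ^ 2
      + (L / 2 + 1 / (2 * η)) * ‖z - x‖ ^ 2
      - (1 / (2 * η)) * ‖y - z‖ ^ 2 := by
  intro z
  set u := x - η • g with hu
  set c : ℝ := 1 / (2 * η) with hc
  have hcpos : 0 < c := by positivity
  -- three-point inequality for the prox
  have three : h y + c * ‖y - u‖ ^ 2 + c * ‖y - z‖ ^ 2 ≤ h z + c * ‖z - u‖ ^ 2 := by
    set C : ℝ := c * ‖y - z‖ ^ 2 with hC
    have hCnn : 0 ≤ C := by positivity
    have main : h y + c * ‖y - u‖ ^ 2 + C ≤ h z + c * ‖z - u‖ ^ 2 := by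
      refine le_of_forall_pos_le_add ?_
      intro ε hε
      set t : ℝ := min (ε / (C + 1)) (1 / 2) with ht
      have ht0 : 0 < t := lt_min (by positivity) (by norm_num)
      have ht1 : t ≤ 1 / 2 := min_le_right _ _
      have ht1' : 0 ≤ 1 - t := by linarith
      have hw := hy ((1 - t) • y + t • z)
      have hcv : h ((1 - t) • y + t • z) ≤ (1 - t) * h y + t * h z :=
        hconv.2 (Set.mem_univ y) (Set.mem_univ z) ht1' ht0.le (by ring)
      have hns : ((1 - t) • y + t • z) - u = (1 - t) • (y - u) + t • (z - u) := by
        module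
      have hpq : (y - u) - (z - u) = y - z := by abel
      have hnorm : ‖((1 - t) • y + t • z) - u‖ ^ 2
          = (1 - t) * ‖y - u‖ ^ 2 + t * ‖z - u‖ ^ 2 - t * (1 - t) * ‖y - z‖ ^ 2 := by
        rw [hns, combo_norm_sq, hpq]
      rw [hnorm] at hw
      have step : h y + c * ‖y - u‖ ^ 2 + (1 - t) * C ≤ h z + c * ‖z - u‖ ^ 2 := by
        have hcomb : h y + c * ‖y - u‖ ^ 2
            ≤ (1 - t) * h y + t * h z + c * ((1 - t) * ‖y - u‖ ^ 2 + t * ‖z - u‖ ^ 2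
              - t * (1 - t) * ‖y - z‖ ^ 2) := by
          refine hw.trans ?_
          have := mul_le_mul_of_nonneg_left hcv (le_of_lt hcpos)
          linarith [hcv]
        have h2 : t * (h y + c * ‖y - u‖ ^ 2 + (1 - t) * C)
            ≤ t * (h z + c * ‖z - u‖ ^ 2) := by
          have expand : (1 - t) * h y + t * h z + c * ((1 - t) * ‖y - u‖ ^ 2
              + t * ‖z - u‖ ^ 2 - t * (1 - t) * ‖y - z‖ ^ 2)
              = (h y + c * ‖y - u‖ ^ 2)
                - t * (h y + c * ‖y - u‖ ^ 2 + (1 - t) * C)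
                + t * (h z + c * ‖z - u‖ ^ 2) := by
            rw [hC]; ring
          rw [expand] at hcomb
          linarith
        exact le_of_mul_le_mul_left h2 ht0
      have htC : t * C ≤ ε := by
        have h1 : t ≤ ε / (C + 1) := min_le_left _ _
        have h2 : t * C ≤ ε / (C + 1) * C := mul_le_mul_of_nonneg_right h1 hCnn
        have h3 : ε / (C + 1) * C ≤ ε := by
          rw [div_mul_eq_mul_div, div_le_iff₀ (by linarith)]
          nlinarith
        linarith
      linarith
    linarith
  -- descent lemma applications
  have d1 := (abs_le.1 (descent_lemma f f' hf L hLip x y)).2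
  have d2 := (abs_le.1 (descent_lemma f f' hf L hLip x z)).1
  rw [real_inner_comm (y - x) (f' x)] at d1
  rw [real_inner_comm (z - x) (f' x)] at d2
  -- norm expansions
  have ey : ‖y - u‖ ^ 2 = ‖y - x‖ ^ 2 + 2 * η * ⟪y - x, g⟫ + η ^ 2 * ‖g‖ ^ 2 := by
    have hyu : y - u = (y - x) + η • g := by rw [hu]; abel
    rw [hyu, norm_add_sq_real, real_inner_smul_right, norm_smul, Real.norm_eq_abs,
      abs_of_nonneg hη.le, mul_pow]
    ring
  have ez : ‖z - u‖ ^ 2 = ‖z - x‖ ^ 2 + 2 * η * ⟪z - x, g⟫ + η ^ 2 * ‖g‖ ^ 2 := by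
    have hzu : z - u = (z - x) + η • g := by rw [hu]; abel
    rw [hzu, norm_add_sq_real, real_inner_smul_right, norm_smul, Real.norm_eq_abs,
      abs_of_nonneg hη.le, mul_pow]
    ring
  -- inner product identity
  have einner : ⟪y - z, f' x - g⟫
      = ⟪y - x, f' x⟫ - ⟪z - x, f' x⟫ - ⟪y - x, g⟫ + ⟪z - x, g⟫ := by
    have hyz : y - z = (y - x) - (z - x) := by abel
    rw [hyz, inner_sub_left, inner_sub_right, inner_sub_right]
    ring
  have hcη : c * (2 * η) = 1 := by
    rw [hc]; field_simp
  have key : c * ‖y - u‖ ^ 2 - c * ‖z - u‖ ^ 2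
      = c * ‖y - x‖ ^ 2 - c * ‖z - x‖ ^ 2 + ⟪y - x, g⟫ - ⟪z - x, g⟫ := by
    rw [ey, ez]
    nlinarith [hcη]
  have hg1 : (L / 2 - c) * ‖y - x‖ ^ 2 = L / 2 * ‖y - x‖ ^ 2 - c * ‖y - x‖ ^ 2 := by ring
  have hg2 : (L / 2 + c) * ‖z - x‖ ^ 2 = L / 2 * ‖z - x‖ ^ 2 + c * ‖z - x‖ ^ 2 := by ring
  rw [einner, hg1, hg2]
  linarith [three, d1, d2, key]
end

section
/- Let f : ℝ^d → ℝ be differentiable with L-Lipschitz gradient, h convex, Ψ = f + h, and 0 < η. Let x ∈ ℝ^d, g = ∇f(x), and x⁺ = prox_{ηh}(x - ηg). Then Ψ(x⁺) ≤ Ψ(x) - (η - Lη²/2)‖P(x, g, η)‖², where P(x, g, η) = (x - x⁺)/η. -/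
/-!
The descent lemma bounds `f x⁺` by the linearization of `f` at `x` plus `L / 2 * ‖x⁺ - x‖ ^ 2`.
Testing the minimality of `x⁺` for the convex objective `h + ‖· - (x - η ∇f x)‖² / (2η)` along
the segment towards `x` and letting the step tend to zero gives
`h x⁺ ≤ h x + ⟪∇f x, x - x⁺⟫ - ‖x - x⁺‖² / η`. Adding the two, the linear terms cancel.
-/
open Set Filter Topology RealInnerProductSpace

variable {E : Type*} [NormedAddCommGroup E] [InnerProductSpace ℝ E]

theorem le_add_inner_add_half_mul_norm_sq_of_lipschitz_gradient [CompleteSpace E]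
    {f : E → ℝ} {f' : E → E} {L : ℝ} {x : E} (hf : ∀ z, HasGradientAt f (f' z) z)
    (hLip : ∀ z, ‖f' z - f' x‖ ≤ L * ‖z - x‖) (y : E) :
    f y ≤ f x + ⟪f' x, y - x⟫ + L / 2 * ‖y - x‖ ^ 2 := by
  set v := y - x
  set φ : ℝ → ℝ := fun t => f (x + t • v) - t * ⟪f' x, v⟫ - L / 2 * t ^ 2 * ‖v‖ ^ 2
  have hφ : ∀ t, HasDerivAt φ (⟪f' (x + t • v), v⟫ - ⟪f' x, v⟫ - L * t * ‖v‖ ^ 2) t := by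
    intro t
    have hline : HasDerivAt (fun t : ℝ => x + t • v) v t := by
      simpa using ((hasDerivAt_id t).smul_const v).const_add x
    have hfline : HasDerivAt (fun t : ℝ => f (x + t • v)) ⟪f' (x + t • v), v⟫ t := by
      exact (hf (x + t • v)).hasFDerivAt.comp_hasDerivAt t hline
    refine ((hfline.sub ((hasDerivAt_id t).mul_const ⟪f' x, v⟫)).sub
      (((hasDerivAt_pow 2 t).const_mul (L / 2)).mul_const (‖v‖ ^ 2))).congr_deriv ?_
    push_cast
    ring
  have hφ' : ∀ t ∈ interior (Ici (0 : ℝ)),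
      ⟪f' (x + t • v), v⟫ - ⟪f' x, v⟫ - L * t * ‖v‖ ^ 2 ≤ 0 := by
    intro t ht
    rw [interior_Ici, mem_Ioi] at ht
    have hgrad : ‖f' (x + t • v) - f' x‖ ≤ L * t * ‖v‖ := by
      simpa [norm_smul, abs_of_pos ht, mul_assoc] using hLip (x + t • v)
    rw [sub_nonpos]
    calc ⟪f' (x + t • v), v⟫ - ⟪f' x, v⟫ = ⟪f' (x + t • v) - f' x, v⟫ :=
          (inner_sub_left _ _ _).symm
      _ ≤ ‖f' (x + t • v) - f' x‖ * ‖v‖ := real_inner_le_norm _ _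
      _ ≤ L * t * ‖v‖ * ‖v‖ := by gcongr
      _ = L * t * ‖v‖ ^ 2 := by ring
  have hanti := antitoneOn_of_hasDerivWithinAt_nonpos (convex_Ici 0)
    (fun t _ => (hφ t).continuousAt.continuousWithinAt) (fun t _ => (hφ t).hasDerivWithinAt) hφ'
  have hφ01 := hanti (mem_Ici.mpr le_rfl) (mem_Ici.mpr zero_le_one) zero_le_one
  simp only [φ, one_smul, zero_smul, add_zero, v, add_sub_cancel] at hφ01
  linarith

theorem ConvexOn.le_add_two_mul_inner_of_isMinOn {s : Set E} {h : E → ℝ}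
    (hh : ConvexOn ℝ s h) {c : ℝ} {u p w : E} (hp : p ∈ s) (hw : w ∈ s)
    (hmin : IsMinOn (fun y => h y + c * ‖y - u‖ ^ 2) s p) :
    h p ≤ h w + 2 * c * ⟪p - u, w - p⟫ := by
  have hstep : ∀ t ∈ Ioo (0 : ℝ) 1,
      h p ≤ h w + 2 * c * ⟪p - u, w - p⟫ + c * t * ‖w - p‖ ^ 2 := by
    rintro t ⟨ht0, ht1⟩
    have hseg : p + t • (w - p) = (1 - t) • p + t • w := by module
    have hconv : h (p + t • (w - p)) ≤ (1 - t) * h p + t * h w := by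
      simpa [hseg, smul_eq_mul] using hh.2 hp hw (by linarith) ht0.le (by ring)
    have hmem : p + t • (w - p) ∈ s := hseg ▸ hh.1 hp hw (by linarith) ht0.le (by ring)
    have hsq : ‖p + t • (w - p) - u‖ ^ 2
        = ‖p - u‖ ^ 2 + 2 * t * ⟪p - u, w - p⟫ + t ^ 2 * ‖w - p‖ ^ 2 := by
      rw [show p + t • (w - p) - u = (p - u) + t • (w - p) by abel, norm_add_sq_real,
        real_inner_smul_right, norm_smul, mul_pow, Real.norm_eq_abs, sq_abs]
      ring
    have hle := isMinOn_iff.mp hmin _ hmem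
    simp only [hsq] at hle
    have hscaled : 0 ≤ t * (h w - h p + 2 * c * ⟪p - u, w - p⟫ + c * t * ‖w - p‖ ^ 2) := by
      linear_combination hle + hconv
    linarith [(mul_nonneg_iff_of_pos_left ht0).mp hscaled]
  have hlim : Tendsto (fun t : ℝ => h w + 2 * c * ⟪p - u, w - p⟫ + c * t * ‖w - p‖ ^ 2)
      (𝓝[>] 0) (𝓝 (h w + 2 * c * ⟪p - u, w - p⟫)) := by
    refine tendsto_nhdsWithin_of_tendsto_nhds ?_
    simpa using (((tendsto_id (x := 𝓝 (0 : ℝ))).const_mul c).mul_const (‖w - p‖ ^ 2)).const_add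
      (h w + 2 * c * ⟪p - u, w - p⟫)
  exact ge_of_tendsto hlim (eventually_of_mem (Ioo_mem_nhdsGT one_pos) hstep)

theorem stmt5_general (d : ℕ) (f h : EuclideanSpace ℝ (Fin d) → ℝ)
    (f' : EuclideanSpace ℝ (Fin d) → EuclideanSpace ℝ (Fin d))
    (hf : ∀ x, HasGradientAt f (f' x) x) (L : ℝ)
    (hLip : ∀ a b, ‖f' a - f' b‖ ≤ L * ‖a - b‖)
    (hconv : ConvexOn ℝ Set.univ h) (η : ℝ) (hη : 0 < η)
    (x xplus : EuclideanSpace ℝ (Fin d))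
    (hprox : ∀ w, h xplus + (1 / (2 * η)) * ‖xplus - (x - η • f' x)‖ ^ 2 ≤
      h w + (1 / (2 * η)) * ‖w - (x - η • f' x)‖ ^ 2) :
    f xplus + h xplus ≤ (f x + h x) - (η - L * η ^ 2 / 2) * ‖η⁻¹ • (x - xplus)‖ ^ 2 := by
  have hdescent : f xplus ≤ f x - ⟪f' x, x - xplus⟫ + L / 2 * ‖x - xplus‖ ^ 2 := by
    have := le_add_inner_add_half_mul_norm_sq_of_lipschitz_gradient hf (fun z => hLip z x) xplus
    rwa [← neg_sub x xplus, inner_neg_right, norm_neg, ← sub_eq_add_neg] at this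
  have hproxgrad : h xplus ≤ h x + ⟪f' x, x - xplus⟫ - ‖x - xplus‖ ^ 2 / η := by
    have := hconv.le_add_two_mul_inner_of_isMinOn (mem_univ xplus) (mem_univ x)
      (fun w _ => hprox w)
    rw [show xplus - (x - η • f' x) = η • f' x - (x - xplus) by abel, inner_sub_left,
      real_inner_smul_left, real_inner_self_eq_norm_sq] at this
    field_simp at this ⊢
    linarith
  have hmapping : (η - L * η ^ 2 / 2) * ‖η⁻¹ • (x - xplus)‖ ^ 2
      = ‖x - xplus‖ ^ 2 / η - L / 2 * ‖x - xplus‖ ^ 2 := by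
    rw [norm_smul, mul_pow, Real.norm_eq_abs, sq_abs]
    field_simp
  rw [hmapping]
  linarith

theorem stmt5 (d : ℕ) (f h : EuclideanSpace ℝ (Fin d) → ℝ)
    (f' : EuclideanSpace ℝ (Fin d) → EuclideanSpace ℝ (Fin d))
    (hf : ∀ x, HasGradientAt f (f' x) x) (L : ℝ) (hL : 0 < L)
    (hLip : ∀ a b, ‖f' a - f' b‖ ≤ L * ‖a - b‖)
    (hconv : ConvexOn ℝ Set.univ h) (η : ℝ) (hη : 0 < η)
    (x xplus : EuclideanSpace ℝ (Fin d))
    (hprox : ∀ w, h xplus + (1 / (2 * η)) * ‖xplus - (x - η • f' x)‖ ^ 2 ≤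
      h w + (1 / (2 * η)) * ‖w - (x - η • f' x)‖ ^ 2) :
    f xplus + h xplus ≤ (f x + h x) - (η - L * η ^ 2 / 2) * ‖η⁻¹ • (x - xplus)‖ ^ 2 :=
  stmt5_general d f h f' hf L hLip hconv η hη x xplus hprox
end
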